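/- For every z ∈ ℂ with z ≠ 0, z ≠ −α and z ≠ −β, one has F(1/conj z) = conj(F(z)) / (conj z)². -/
import Mathlib


noncomputable section
open Complex ComplexConjugate

/-- `α = exp(iπ/4)`. -/
def bolzaAlpha : ℂ := Complex.exp (Real.pi * Complex.I / 4)

/-- `β = exp(3iπ/4)`. -/
def bolzaBeta : ℂ := Complex.exp (3 * Real.pi * Complex.I / 4)

/-- The affine Bolza curve `P = {(z,w) : w²(z+α)(z+β) = z(z−α)(z−β)}`. -/
def BolzaCurve : Set (ℂ × ℂ) :=
  {p | p.2 ^ 2 * (p.1 + bolzaAlpha) * (p.1 + bolzaBeta)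
       = p.1 * (p.1 - bolzaAlpha) * (p.1 - bolzaBeta)}

/-- The symmetry `s₁(z,w) = (conj z, conj z / conj w)`. -/
def s1 (p : ℂ × ℂ) : ℂ × ℂ := (conj p.1, conj p.1 / conj p.2)

/-- The symmetry `s₂(z,w) = (−conj z, i·conj w)`. -/
def s2 (p : ℂ × ℂ) : ℂ × ℂ := (-conj p.1, Complex.I * conj p.2)

/-- The symmetry `s₃(z,w) = (1/conj z, conj w / conj z)`. -/
def s3 (p : ℂ × ℂ) : ℂ × ℂ := (1 / conj p.1, conj p.2 / conj p.1)

/-- The hyperelliptic involution `T(z,w) = (z,−w)`. -/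
def hypT (p : ℂ × ℂ) : ℂ × ℂ := (p.1, -p.2)

/-- `F(z) = z(z−α)(z−β)/((z+α)(z+β))`. -/
def bolzaF (z : ℂ) : ℂ :=
  z * (z - bolzaAlpha) * (z - bolzaBeta) / ((z + bolzaAlpha) * (z + bolzaBeta))

lemma mul_ab : bolzaAlpha * bolzaBeta = -1 := by
  rw [bolzaAlpha, bolzaBeta, ← Complex.exp_add]
  rw [show (Real.pi : ℂ) * Complex.I / 4 + 3 * Real.pi * Complex.I / 4 = Real.pi * Complex.I by ring]
  exact Complex.exp_pi_mul_I

lemma conj_a : conj bolzaAlpha = -bolzaBeta := by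
  rw [bolzaAlpha, ← Complex.exp_conj]
  have : conj ((Real.pi : ℂ) * Complex.I / 4) = -(Real.pi * Complex.I / 4) := by
    simp [Complex.conj_I, map_ofNat]
    ring
  rw [this, show -((Real.pi:ℂ) * Complex.I / 4) = 3 * Real.pi * Complex.I / 4 + (-(Real.pi * Complex.I)) by ring,
    Complex.exp_add, Complex.exp_neg, Complex.exp_pi_mul_I, bolzaBeta]
  field_simp

lemma conj_b : conj bolzaBeta = -bolzaAlpha := by
  have := conj_a
  have h2 := congrArg conj this
  rw [Complex.conj_conj] at h2
  simp at h2
  linear_combination h2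

/-- For `z ≠ 0`, `z ≠ −α`, `z ≠ −β`, one has `F(1/conj z) = conj(F(z)) / (conj z)²`. -/
theorem bolzaF_inv_conj (z : ℂ) (hz : z ≠ 0) (hα : z ≠ -bolzaAlpha) (hβ : z ≠ -bolzaBeta) :
    bolzaF (1 / conj z) = conj (bolzaF z) / (conj z) ^ 2 := by
  have ha0 : bolzaAlpha ≠ 0 := Complex.exp_ne_zero _
  have hb0 : bolzaBeta ≠ 0 := Complex.exp_ne_zero _
  set w := conj z with hw
  have hw0 : w ≠ 0 := by simpa [hw] using hz
  have hwa : w - bolzaAlpha ≠ 0 := by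
    intro h
    apply hβ
    have : z = conj bolzaAlpha := by
      have := congrArg conj (sub_eq_zero.mp h)
      simpa [hw] using this
    rw [this, conj_a]
  have hwb : w - bolzaBeta ≠ 0 := by
    intro h
    apply hα
    have : z = conj bolzaBeta := by
      have := congrArg conj (sub_eq_zero.mp h)
      simpa [hw] using this
    rw [this, conj_b]
  have e1 : 1 / w + bolzaAlpha = bolzaAlpha * (w - bolzaBeta) / w := by
    field_simp
    linear_combination mul_ab
  have e2 : 1 / w + bolzaBeta = bolzaBeta * (w - bolzaAlpha) / w := by
    field_simp
    linear_combination mul_ab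
  have e3 : 1 / w - bolzaAlpha = -(bolzaAlpha * (w + bolzaBeta)) / w := by
    field_simp
    linear_combination mul_ab
  have e4 : 1 / w - bolzaBeta = -(bolzaBeta * (w + bolzaAlpha)) / w := by
    field_simp
    linear_combination mul_ab
  have h1 : (1 / w + bolzaAlpha) ≠ 0 := by
    rw [e1]; exact div_ne_zero (mul_ne_zero ha0 hwb) hw0
  have h2 : (1 / w + bolzaBeta) ≠ 0 := by
    rw [e2]; exact div_ne_zero (mul_ne_zero hb0 hwa) hw0
  rw [bolzaF, bolzaF]
  simp only [map_div₀, map_mul, map_add, map_sub, conj_a, conj_b, ← hw]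
  rw [e1, e2, e3, e4]
  have hwab : w + -bolzaBeta ≠ 0 := by rw [← sub_eq_add_neg]; exact hwb
  have hwbb : w + -bolzaAlpha ≠ 0 := by rw [← sub_eq_add_neg]; exact hwa
  field_simp
  ring

end
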